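/- Let q be an odd prime power, a ∈ F_{q^2}^*, b = 0, and suppose f(x) = a x + x^{2q-1} is a permutation polynomial of F_{q^2}. Then (-a)^{(q+1)/2} = -1 or (-a)^{(q+1)/2} = 3. -/

import Mathlib

/-!
Hermite's criterion: as `f` permutes `F` and `2q - 2 < q² - 1`, we get `∑ₓ f(x)^(2q-2) = 0`.
Expanding binomially, `f(x)^(2q-2) = ∑ⱼ C(2q-2, j) a^(2q-2-j) x^((2q-2)(j+1))`, and summing over
`x` kills every term except those with `m ∣ j + 1`, where `m = (q+1)/2`, i.e.
`j = m-1, 2m-1, 3m-1`.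
In characteristic `p`, Vandermonde and `C(q-1, i) = (-1)^i` give
`C(2q-2, j) = (-1)^j min(j+1, 2q-1-j)`. Writing `B = (-a)^m` and using `2m = 1` in `F`, the
identity becomes `B (B + 1) (B - 3) = 0`, and `B ≠ 0`.
-/

open Finset

theorem FiniteField.sum_pow_eq_ite {K : Type*} [Field K] [Fintype K] [DecidableEq K] {i : ℕ}
    (hi : i ≠ 0) : ∑ x : K, x ^ i = if Fintype.card K - 1 ∣ i then -1 else 0 := by
  rw [← FiniteField.sum_pow_units, ← Fintype.sum_subtype_add_sum_subtype (· ≠ (0 : K))]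
  have hzero : ∑ x : {x : K // ¬x ≠ 0}, (x : K) ^ i = 0 :=
    sum_eq_zero fun x _ => by simp [not_not.1 x.2, zero_pow hi]
  rw [hzero, add_zero]
  exact Fintype.sum_equiv unitsEquivNeZero.symm _ _ fun _ => rfl

theorem Finset.sum_range_mul_filter_dvd_succ {M : Type*} [AddCommMonoid M] (f : ℕ → M) {m : ℕ}
    (hm : 0 < m) (k : ℕ) :
    ∑ j ∈ range (m * k) with m ∣ j + 1, f j = ∑ i ∈ range k, f (m * (i + 1) - 1) := by
  have hinj : Set.InjOn (fun i => m * (i + 1) - 1) (range k) := fun x _ y _ hxy => by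
    have := Nat.sub_one_cancel (by positivity) (by positivity) hxy
    simpa using Nat.eq_of_mul_eq_mul_left hm this
  rw [← sum_image hinj]
  congr 1
  ext j
  simp only [mem_filter, mem_range, mem_image]
  constructor
  · rintro ⟨hj, c, hc⟩
    have hc0 : 0 < c := Nat.pos_of_ne_zero (by rintro rfl; omega)
    refine ⟨c - 1, ?_, by rw [Nat.sub_add_cancel hc0]; omega⟩
    have := Nat.le_of_mul_le_mul_left (show m * c ≤ m * k by omega) hm
    omega
  · rintro ⟨i, hi, rfl⟩
    have := Nat.mul_le_mul_left m (show i + 1 ≤ k by omega)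
    have := Nat.le_mul_of_pos_right m (by omega : 0 < i + 1)
    exact ⟨by omega, ⟨i + 1, by omega⟩⟩

theorem Nat.cast_choose_prime_pow_sub_one {R : Type*} [Ring R] (p : ℕ) [hp : Fact p.Prime]
    [CharP R p] {n j : ℕ} (hj : j < p ^ n) : ((p ^ n - 1).choose j : R) = (-1) ^ j := by
  induction j with
  | zero => simp
  | succ j ih =>
    have hpascal := Nat.choose_succ_succ' (p ^ n - 1) j
    rw [Nat.sub_add_cancel (Nat.one_le_pow _ _ hp.out.pos)] at hpascal
    have hzero : ((p ^ n).choose (j + 1) : R) = 0 :=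
      (CharP.cast_eq_zero_iff R p _).2 (hp.out.dvd_choose_pow (by omega) (by omega))
    rw [hpascal, Nat.cast_add, ih (by omega)] at hzero
    rw [eq_neg_of_add_eq_zero_right hzero, pow_succ, mul_neg_one]

theorem Nat.cast_choose_two_mul_prime_pow_sub_two {R : Type*} [Ring R] (p : ℕ)
    [hp : Fact p.Prime] [CharP R p] (n j : ℕ) :
    ((2 * p ^ n - 2).choose j : R) = (-1) ^ j * (min (j + 1) (2 * p ^ n - 1 - j) : ℕ) := by
  set q := p ^ n
  have hq : 0 < q := Nat.pow_pos hp.out.pos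
  have hfactor (i : ℕ) (hi : i ≤ j) : ((q - 1).choose i * (q - 1).choose (j - i) : R) =
      if i < q ∧ j - i < q then (-1) ^ j else 0 := by
    split_ifs with h
    · rw [Nat.cast_choose_prime_pow_sub_one p h.1, Nat.cast_choose_prime_pow_sub_one p h.2,
        ← pow_add, Nat.add_sub_cancel' hi]
    · rcases not_and_or.1 h with h | h
      · rw [Nat.choose_eq_zero_of_lt (show q - 1 < i by omega), Nat.cast_zero, zero_mul]
      · rw [Nat.choose_eq_zero_of_lt (show q - 1 < j - i by omega), Nat.cast_zero, mul_zero]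
  have hcount : #{i ∈ range (j + 1) | i < q ∧ j - i < q} = min (j + 1) (2 * q - 1 - j) := by
    rw [show {i ∈ range (j + 1) | i < q ∧ j - i < q} = Ico (j + 1 - q) (min (j + 1) q) by
      ext i; simp only [mem_filter, mem_range, mem_Ico, lt_min_iff]; omega, Nat.card_Ico]
    omega
  rw [show 2 * q - 2 = (q - 1) + (q - 1) by omega, Nat.add_choose_eq,
    Finset.Nat.sum_antidiagonal_eq_sum_range_succ_mk, Nat.cast_sum,
    sum_congr rfl fun i hi =>
      (Nat.cast_mul _ _).trans (hfactor i (Nat.lt_succ_iff.1 (mem_range.1 hi))),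
    ← sum_filter, sum_const, hcount, nsmul_eq_mul, Nat.cast_comm]

theorem sum_choose_mul_pow_eq_zero_of_bijective {F : Type*} [Field F] [Fintype F] {q m : ℕ}
    (hcard : Fintype.card F = q ^ 2) (hm : q + 1 = 2 * m) {a : F}
    (hf : Function.Bijective fun x : F => a * x + x ^ (2 * q - 1)) :
    ∑ j ∈ range (2 * q - 1) with m ∣ j + 1, ((2 * q - 2).choose j : F) * a ^ (2 * q - 2 - j) =
      0 := by
  classical
  have hq : 1 < q := (Nat.one_lt_pow_iff two_ne_zero).1 (hcard ▸ Fintype.one_lt_card)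
  have hcard' : Fintype.card F - 1 = (2 * q - 2) * m := by
    rw [hcard, ← one_pow 2, Nat.sq_sub_sq, hm, show 2 * q - 2 = 2 * (q - 1) by omega]
    ring
  have hexpand (x : F) : (a * x + x ^ (2 * q - 1)) ^ (2 * q - 2) = ∑ j ∈ range (2 * q - 1),
      (2 * q - 2).choose j * a ^ (2 * q - 2 - j) * x ^ ((2 * q - 2) * (j + 1)) := by
    rw [add_comm, add_pow, show 2 * q - 2 + 1 = 2 * q - 1 by omega]
    refine sum_congr rfl fun j hj => ?_
    obtain ⟨k, hk⟩ : ∃ k, 2 * q - 2 = j + k := ⟨2 * q - 2 - j, by simp at hj; omega⟩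
    rw [show 2 * q - 1 = j + k + 1 by omega, hk, Nat.add_sub_cancel_left]
    ring
  have hpow (j : ℕ) : ∑ x : F, x ^ ((2 * q - 2) * (j + 1)) = if m ∣ j + 1 then -1 else 0 := by
    have hpos : (2 * q - 2) * (j + 1) ≠ 0 := mul_ne_zero (by omega) j.succ_ne_zero
    simp only [FiniteField.sum_pow_eq_ite hpos, hcard',
      Nat.mul_dvd_mul_iff_left (by omega : 0 < 2 * q - 2)]
  have hherm : ∑ x : F, (a * x + x ^ (2 * q - 1)) ^ (2 * q - 2) = 0 :=
    (hf.sum_comp (· ^ (2 * q - 2))).trans <| FiniteField.sum_pow_lt_card_sub_one F _ <| by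
      rw [hcard']; exact lt_mul_of_one_lt_right (by omega) (by omega)
  simp only [hexpand] at hherm
  rw [sum_comm] at hherm
  simp only [← mul_sum, hpow, mul_ite, mul_neg_one, mul_zero] at hherm
  rwa [← sum_filter, sum_neg_distrib, neg_eq_zero] at hherm

theorem Nat.cast_choose_two_mul_prime_pow_sub_two_mul_pow {R : Type*} [CommRing R] (p : ℕ)
    [hp : Fact p.Prime] [CharP R p] (n j : ℕ) (x : R) :
    (2 * p ^ n - 2).choose j * x ^ (2 * p ^ n - 2 - j) * (-x) ^ 3 =
      (min (j + 1) (2 * p ^ n - 1 - j) : ℕ) * (-x) ^ (2 * p ^ n + 1 - j) := by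
  set q := p ^ n
  have hq : 0 < q := Nat.pow_pos hp.out.pos
  rcases le_or_gt j (2 * q - 2) with hj | hj
  · have hsign : (-1 : R) ^ j * x ^ (2 * q - 2 - j) = (-x) ^ (2 * q - 2 - j) := by
      rw [neg_pow x, neg_one_pow_eq_pow_mod_two, show j % 2 = (2 * q - 2 - j) % 2 by omega,
        ← neg_one_pow_eq_pow_mod_two]
    rw [Nat.cast_choose_two_mul_prime_pow_sub_two p,
      show 2 * q + 1 - j = 2 * q - 2 - j + 3 by omega, pow_add, ← hsign]
    ring
  · rw [Nat.choose_eq_zero_of_lt hj, show 2 * q - 1 - j = 0 by omega]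
    simp

theorem eq_neg_one_or_eq_three_of_cubic_eq_zero {F : Type*} [Field F] {μ B : F}
    (hμ : 2 * μ = 1) (hB : B ≠ 0) (h : μ * B ^ 3 + (2 * μ - 2) * B ^ 2 + (μ - 2) * B = 0) :
    B = -1 ∨ B = 3 := by
  have hcubic : B * ((B + 1) * (B - 3)) = 0 := by
    linear_combination 2 * h - (B ^ 3 + 2 * B ^ 2 + B) * hμ
  rcases mul_eq_zero.1 ((mul_eq_zero.1 hcubic).resolve_left hB) with h | h
  · exact Or.inl (eq_neg_of_add_eq_zero_left h)
  · exact Or.inr (sub_eq_zero.1 h)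

theorem neg_pow_eq_neg_one_or_three_of_sum_eq_zero {F : Type*} [Field F] (p : ℕ)
    [hp : Fact p.Prime] [CharP F p] {n m : ℕ} (hn : 0 < n) (hm : p ^ n + 1 = 2 * m) {a : F}
    (ha : a ≠ 0) (h : ∑ j ∈ range (2 * p ^ n - 1) with m ∣ j + 1,
      ((2 * p ^ n - 2).choose j : F) * a ^ (2 * p ^ n - 2 - j) = 0) :
    (-a) ^ m = -1 ∨ (-a) ^ m = 3 := by
  set q := p ^ n
  have hq : 1 < q := Nat.one_lt_pow hn.ne' hp.out.one_lt
  -- After multiplying by `(-a)^3`, the term with `j + 1 = m * k` is a multiple of `((-a)^m)^(4-k)`.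
  have hsum : ∑ j ∈ range (m * 4) with m ∣ j + 1,
      ((min (j + 1) (2 * q - 1 - j) : ℕ) : F) * (-a) ^ (2 * q + 1 - j) = 0 := by
    have hsub := filter_subset_filter (m ∣ · + 1)
      (range_subset_range.2 (by omega : 2 * q - 1 ≤ m * 4))
    rw [← sum_subset hsub]
    · have h3 := congrArg (· * (-a) ^ 3) h
      rwa [zero_mul, sum_mul,
        sum_congr rfl fun j _ => Nat.cast_choose_two_mul_prime_pow_sub_two_mul_pow p n j a] at h3
    · intro j hj4 hj
      simp only [mem_filter, mem_range, not_and] at hj4 hj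
      rw [show 2 * q - 1 - j = 0 by omega, min_eq_right (Nat.zero_le _), Nat.cast_zero, zero_mul]
  simp only [sum_range_mul_filter_dvd_succ _ (by omega : 0 < m), sum_range_succ, sum_range_zero,
    zero_add] at hsum
  have hrel : ((m : ℕ) : F) * (-a) ^ (m * 3) + ((2 * m - 2 : ℕ) : F) * (-a) ^ (m * 2) +
      ((m - 2 : ℕ) : F) * (-a) ^ (m * 1) + ((0 : ℕ) : F) * (-a) ^ (m * 0) = 0 := by
    convert hsum using 6 <;> omega
  rw [Nat.cast_sub (by omega : 2 ≤ 2 * m), Nat.cast_sub (by omega : 2 ≤ m), pow_mul, pow_mul,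
    pow_mul] at hrel
  push_cast at hrel
  have hμ : 2 * (m : F) = 1 := by
    have hq0 : (q : F) = 0 := (CharP.cast_eq_zero_iff F p q).2 (dvd_pow_self p hn.ne')
    have hm' := congrArg (Nat.cast : ℕ → F) hm
    push_cast at hm'
    linear_combination hq0 - hm'
  exact eq_neg_one_or_eq_three_of_cubic_eq_zero hμ (pow_ne_zero _ (neg_ne_zero.2 ha))
    (by linear_combination hrel)

/-- For odd prime power `q` and `a ∈ F_{q²}*`, if `f(x) = a x + x^(2q-1)` is a
permutation polynomial of `F_{q²}` then `(-a)^((q+1)/2) = -1` or `= 3`. -/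
theorem stmt_7 (p n q : ℕ) (hp : p.Prime) (hn : 0 < n) (hq : q = p ^ n)
    (hodd : Odd q)
    (F : Type*) [Field F] [Fintype F] (hcard : Fintype.card F = q ^ 2)
    (a : F) (ha : a ≠ 0)
    (hPP : Function.Bijective (fun x : F => a * x + x ^ (2 * q - 1))) :
    (-a) ^ ((q + 1) / 2) = -1 ∨ (-a) ^ ((q + 1) / 2) = 3 := by
  have : Fact p.Prime := ⟨hp⟩
  have : CharP F p :=
    charP_of_card_eq_prime_pow (f := 2 * n) (by rw [hcard, hq, ← pow_mul, mul_comm])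
  obtain ⟨k, hk⟩ := hodd
  have hm : q + 1 = 2 * (k + 1) := by omega
  rw [show (q + 1) / 2 = k + 1 by omega]
  subst hq
  exact neg_pow_eq_neg_one_or_three_of_sum_eq_zero p hn hm ha
    (sum_choose_mul_pow_eq_zero_of_bijective hcard hm hPP)
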